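/- Let H₁ and H₂ be finite-dimensional complex inner product spaces and let f, g : H₁ →ₗ[ℂ] H₂ be linear maps. Then TensorProduct.map f (LinearMap.adjoint f) = TensorProduct.map g (LinearMap.adjoint g) if and only if there exists z : ℂ with ‖z‖ = 1 and f = z • g. -/

import Mathlib

/-!
Evaluating `f ⊗ f†` on `w ⊗ u` and pairing with `⟪v, ·⟫ ⊗ ⟪x, ·⟫` gives `⟪v, f w⟫ * ⟪f x, u⟫`,
so equality of `f ⊗ f†` and `g ⊗ g†` yields the operator identity `⟪f x, u⟫ • f w = ⟪g x, u⟫ • g w`.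
Taking `u = f x₀` with `f x₀ ≠ 0` shows `f = c • g`, and since
`(c • g) ⊗ (c • g)† = |c|² • (g ⊗ g†)` with `g ⊗ g† ≠ 0` for `g ≠ 0`, the constant has `|c| = 1`.
-/

open scoped TensorProduct InnerProductSpace

namespace LinearMap

variable {𝕜 E F : Type*} [RCLike 𝕜]
  [NormedAddCommGroup E] [InnerProductSpace 𝕜 E] [NormedAddCommGroup F] [InnerProductSpace 𝕜 F]

theorem exists_eq_smul_of_forall_inner_smul_eq {f g : E →ₗ[𝕜] F}
    (h : ∀ x w u, ⟪f x, u⟫_𝕜 • f w = ⟪g x, u⟫_𝕜 • g w) : ∃ c : 𝕜, f = c • g := by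
  by_cases hf : f = 0
  · exact ⟨0, by simp [hf]⟩
  obtain ⟨x₀, hx₀⟩ : ∃ x, f x ≠ 0 := by simpa [LinearMap.ext_iff] using hf
  have hnorm : ⟪f x₀, f x₀⟫_𝕜 ≠ 0 := inner_self_ne_zero.mpr hx₀
  refine ⟨⟪g x₀, f x₀⟫_𝕜 / ⟪f x₀, f x₀⟫_𝕜, LinearMap.ext fun w => ?_⟩
  rw [smul_apply, div_eq_inv_mul, mul_smul, ← h x₀ w (f x₀), inv_smul_smul₀ hnorm]

variable [FiniteDimensional 𝕜 E] [FiniteDimensional 𝕜 F]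

theorem lid_map_innerₛₗ_map_adjoint_tmul (f : E →ₗ[𝕜] F) (v : F) (x w : E) (u : F) :
    TensorProduct.lid 𝕜 𝕜 (TensorProduct.map (innerₛₗ 𝕜 v) (innerₛₗ 𝕜 x)
      (TensorProduct.map f (adjoint f) (w ⊗ₜ u))) = ⟪v, f w⟫_𝕜 * ⟪f x, u⟫_𝕜 := by
  simp [adjoint_inner_right]

theorem inner_smul_eq_of_map_adjoint_eq {f g : E →ₗ[𝕜] F}
    (h : TensorProduct.map f (adjoint f) = TensorProduct.map g (adjoint g)) (x w : E) (u : F) :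
    ⟪f x, u⟫_𝕜 • f w = ⟪g x, u⟫_𝕜 • g w := by
  refine ext_inner_left 𝕜 fun v => ?_
  have := lid_map_innerₛₗ_map_adjoint_tmul f v x w u
  rw [h, lid_map_innerₛₗ_map_adjoint_tmul] at this
  simpa only [inner_smul_right, mul_comm] using this.symm

theorem eq_zero_of_map_adjoint_eq_zero {g : E →ₗ[𝕜] F}
    (h : TensorProduct.map g (adjoint g) = 0) : g = 0 := by
  ext x
  have := inner_smul_eq_of_map_adjoint_eq (g := 0) (by simpa using h) x x (g x)
  simpa using this

theorem map_smul_adjoint_smul (c : 𝕜) (g : E →ₗ[𝕜] F) :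
    TensorProduct.map (c • g) (adjoint (c • g)) =
      ((‖c‖ ^ 2 : ℝ) : 𝕜) • TensorProduct.map g (adjoint g) := by
  rw [map_smulₛₗ, TensorProduct.map_smul_left, TensorProduct.map_smul_right, smul_smul,
    RCLike.mul_conj]
  norm_cast

end LinearMap

open LinearMap in
theorem stmt_2 {H₁ H₂ : Type*}
    [NormedAddCommGroup H₁] [InnerProductSpace ℂ H₁] [FiniteDimensional ℂ H₁]
    [NormedAddCommGroup H₂] [InnerProductSpace ℂ H₂] [FiniteDimensional ℂ H₂]
    (f g : H₁ →ₗ[ℂ] H₂) :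
    TensorProduct.map f (LinearMap.adjoint f) =
      TensorProduct.map g (LinearMap.adjoint g) ↔
    ∃ z : ℂ, ‖z‖ = 1 ∧ f = z • g := by
  constructor
  · intro h
    obtain ⟨c, rfl⟩ := exists_eq_smul_of_forall_inner_smul_eq (inner_smul_eq_of_map_adjoint_eq h)
    by_cases hg : g = 0
    · exact ⟨1, by simp, by simp [hg]⟩
    have hmap : TensorProduct.map g (adjoint g) ≠ 0 :=
      fun h₀ => hg (eq_zero_of_map_adjoint_eq_zero h₀)
    rw [map_smul_adjoint_smul] at h
    have hc : ((‖c‖ ^ 2 : ℝ) : ℂ) = 1 :=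
      smul_left_injective ℂ hmap (h.trans (one_smul ℂ _).symm)
    norm_cast at hc
    exact ⟨c, (pow_eq_one_iff_of_nonneg (norm_nonneg c) two_ne_zero).mp hc, rfl⟩
  · rintro ⟨z, hz, rfl⟩
    rw [map_smul_adjoint_smul, hz]
    simp
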